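/- Suppose the factor graph admits a valid solution x*, the priors satisfy the sufficient initialization for x*, and for some n ≥ 0 the variable-to-factor messages satisfy m^{(n)}_{v→J}(x*_v) > m^{(n)}_{v→J}(1 − x*_v) for every v ∈ V and every J ∈ 𝒥_v. Then the variable-to-factor messages at the next iteration satisfy m^{(n+1)}_{v→J}(x*_v) > m^{(n+1)}_{v→J}(1 − x*_v) for every v ∈ V and every J ∈ 𝒥_v. -/

import Mathlib

open Finset

/-- A factor graph: finite variable index set `V`, finite factor index set `𝒥`,
a nonempty neighborhood `nbhd J ⊆ V` for each factor `J`, every variable belonging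
to at least one factor, and a `{0,1}`-valued factor function `g J` on `{0,1}^{V_J}`. -/
structure FactorGraph (V 𝒥 : Type) [Fintype V] [DecidableEq V] [Fintype 𝒥] [DecidableEq 𝒥] where
  nbhd : 𝒥 → Finset V
  nbhd_nonempty : ∀ J : 𝒥, (nbhd J).Nonempty
  facs_nonempty : ∀ v : V, ∃ J : 𝒥, v ∈ nbhd J
  g : (J : 𝒥) → ({y // y ∈ nbhd J} → Bool) → Bool

variable {V 𝒥 : Type} [Fintype V] [DecidableEq V] [Fintype 𝒥] [DecidableEq 𝒥]

/-- `𝒥_v`: the set of factors adjacent to variable `v`. -/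
def FactorGraph.Jset (FG : FactorGraph V 𝒥) (v : V) : Finset 𝒥 :=
  univ.filter fun J => v ∈ FG.nbhd J

/-- Restriction of a global assignment to the neighborhood of factor `J`. -/
def FactorGraph.restrict (FG : FactorGraph V 𝒥) (x : V → Bool) (J : 𝒥) :
    {y // y ∈ FG.nbhd J} → Bool :=
  fun y => x y.1

/-- `x` is a valid solution if every factor evaluates to `1` on it. -/
def FactorGraph.ValidSolution (FG : FactorGraph V 𝒥) (x : V → Bool) : Prop :=
  ∀ J : 𝒥, FG.g J (FG.restrict x J) = true

/-- `κ_v = max_{J ∈ 𝒥_v} |{z ∈ {0,1}^{V_J} : g_J(z) = 1}|`. -/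
def FactorGraph.kappa (FG : FactorGraph V 𝒥) (v : V) : ℕ :=
  (FG.Jset v).sup fun J =>
    ((univ : Finset ({y // y ∈ FG.nbhd J} → Bool)).filter fun z => FG.g J z = true).card

/-- `ε_v = 1 / (1 + κ_v ^ |𝒥_v|)`. -/
noncomputable def FactorGraph.eps (FG : FactorGraph V 𝒥) (v : V) : ℝ :=
  1 / (1 + (FG.kappa v : ℝ) ^ (FG.Jset v).card)

/-- Priors: `P_v(0) = q_v`, `P_v(1) = 1 - q_v`. -/
def prior (q : V → ℝ) (v : V) (x : Bool) : ℝ :=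
  if x then 1 - q v else q v

/-- A run of loopy belief propagation on the factor graph `FG` with priors `q`:
messages `mVF` (variable-to-factor) and `mFV` (factor-to-variable) in `[0,1]`,
positive normalization constants, initialization by the priors, the sum-product
update rules, and per-message normalization. -/
structure BPRun (FG : FactorGraph V 𝒥) (q : V → ℝ) where
  q_mem : ∀ v : V, q v ∈ Set.Icc (0 : ℝ) 1
  mVF : ℕ → V → 𝒥 → Bool → ℝ
  mFV : ℕ → 𝒥 → V → Bool → ℝ
  CFV : ℕ → 𝒥 → V → ℝ
  CVF : ℕ → V → 𝒥 → ℝ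
  CFV_pos : ∀ n J v, v ∈ FG.nbhd J → 0 < CFV n J v
  CVF_pos : ∀ n v J, v ∈ FG.nbhd J → 0 < CVF n v J
  mVF_mem : ∀ n v J x, v ∈ FG.nbhd J → mVF n v J x ∈ Set.Icc (0 : ℝ) 1
  mFV_mem : ∀ n J v x, v ∈ FG.nbhd J → mFV n J v x ∈ Set.Icc (0 : ℝ) 1
  mVF_init : ∀ v J, v ∈ FG.nbhd J →
    mVF 0 v J false = q v ∧ mVF 0 v J true = 1 - q v
  mFV_eq : ∀ n : ℕ, ∀ J v, ∀ hv : v ∈ FG.nbhd J, ∀ x : Bool,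
    mFV (n + 1) J v x = CFV (n + 1) J v *
      ∑ z : {y // y ∈ FG.nbhd J} → Bool,
        (if z ⟨v, hv⟩ = x ∧ FG.g J z = true then
          ∏ y ∈ ((FG.nbhd J).erase v).attach,
            mVF n y.1 J (z ⟨y.1, Finset.mem_of_mem_erase y.2⟩)
        else 0)
  mVF_eq : ∀ n : ℕ, ∀ v J, v ∈ FG.nbhd J → ∀ x : Bool,
    mVF (n + 1) v J x = CVF (n + 1) v J * prior q v x *
      ∏ I ∈ (FG.Jset v).erase J, mFV (n + 1) I v x
  mVF_norm : ∀ n v J, v ∈ FG.nbhd J → mVF n v J false + mVF n v J true = 1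
  mFV_norm : ∀ n J v, v ∈ FG.nbhd J →
    mFV (n + 1) J v false + mFV (n + 1) J v true = 1

/-- Marginals: `r^{(n)}_v(x) = P_v(x) · ∏_{J ∈ 𝒥_v} m^{(n)}_{J→v}(x)`. -/
noncomputable def marginal (FG : FactorGraph V 𝒥) {q : V → ℝ} (R : BPRun FG q)
    (n : ℕ) (v : V) (x : Bool) : ℝ :=
  prior q v x * ∏ J ∈ FG.Jset v, R.mFV n J v x

/-- The priors satisfy the sufficient initialization for `x`:
`q_v > 1 - ε_v` if `x_v = 0` and `q_v < ε_v` if `x_v = 1`. -/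
def SuffInit (FG : FactorGraph V 𝒥) (q : V → ℝ) (x : V → Bool) : Prop :=
  ∀ v : V, (x v = false → 1 - FG.eps v < q v) ∧ (x v = true → q v < FG.eps v)

/-!
Let `x̄ = ¬x*_v`. Since every incoming message prefers `x*`, each summand of a factor-to-variable
message is dominated by the term of the valid configuration `x*|_{V_I}`, which itself occurs in the
sum for `x*_v`; summing over the at most `κ_v` satisfying configurations gives
`m_{I→v}(x̄) ≤ κ_v · m_{I→v}(x*_v)`. Multiplying over the `|𝒥_v| - 1` factors `I ≠ J` loses at most
`κ_v^{|𝒥_v|}`, and the sufficient initialization says exactly that `P_v(x̄) · κ_v^{|𝒥_v|} < P_v(x*_v)`.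
-/

theorem Bool.le_of_lt_not {α : Type*} [Preorder α] {f : Bool → α} {b : Bool}
    (h : f (!b) < f b) (c : Bool) : f c ≤ f b := by
  rcases Bool.eq_or_eq_not c b with rfl | rfl
  exacts [le_rfl, h.le]

theorem Finset.prod_le_pow_card_mul_prod {ι R : Type*} [CommMonoidWithZero R] [Preorder R]
    [ZeroLEOneClass R] [PosMulMono R] {s : Finset ι} {f g : ι → R} {c : R}
    (hf : ∀ i ∈ s, 0 ≤ f i) (h : ∀ i ∈ s, f i ≤ c * g i) :
    ∏ i ∈ s, f i ≤ c ^ s.card * ∏ i ∈ s, g i := by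
  calc ∏ i ∈ s, f i ≤ ∏ i ∈ s, c * g i := Finset.prod_le_prod hf h
    _ = c ^ s.card * ∏ i ∈ s, g i := by rw [Finset.prod_mul_distrib, Finset.prod_const]

theorem mul_pow_lt_one_sub {p κ : ℝ} {d e : ℕ} (hp : 0 ≤ p) (hpd : p < 1 / (1 + κ ^ d))
    (hκ : 1 ≤ κ) (hed : e ≤ d) : p * κ ^ e < 1 - p := by
  have hd : p * (1 + κ ^ d) < 1 := by
    rwa [lt_div_iff₀ (by positivity)] at hpd
  have hκed : κ ^ e ≤ κ ^ d := pow_le_pow_right₀ hκ hed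
  nlinarith

namespace FactorGraph

variable (FG : FactorGraph V 𝒥)

def sat (J : 𝒥) : Finset ({y // y ∈ FG.nbhd J} → Bool) :=
  univ.filter fun z => FG.g J z = true

theorem mem_Jset {v : V} {J : 𝒥} : J ∈ FG.Jset v ↔ v ∈ FG.nbhd J := by
  simp [Jset]

theorem card_sat_le_kappa {v : V} {J : 𝒥} (hv : v ∈ FG.nbhd J) : (FG.sat J).card ≤ FG.kappa v :=
  Finset.le_sup (f := fun J => (FG.sat J).card) (FG.mem_Jset.2 hv)

variable {FG}

theorem ValidSolution.restrict_mem_sat {x : V → Bool} (hx : FG.ValidSolution x) (J : 𝒥) :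
    FG.restrict x J ∈ FG.sat J := by
  simp [sat, hx J]

theorem ValidSolution.one_le_kappa {x : V → Bool} (hx : FG.ValidSolution x) (v : V) :
    1 ≤ FG.kappa v := by
  obtain ⟨J, hv⟩ := FG.facs_nonempty v
  exact (Finset.card_pos.2 ⟨_, hx.restrict_mem_sat J⟩).trans_le (FG.card_sat_le_kappa hv)

variable (FG)

def factorWeight (m : V → Bool → ℝ) (J : 𝒥) (v : V) (z : {y // y ∈ FG.nbhd J} → Bool) : ℝ :=
  ∏ y ∈ ((FG.nbhd J).erase v).attach, m y.1 (z ⟨y.1, Finset.mem_of_mem_erase y.2⟩)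

/-- `m_{J→v}(x)` before multiplication by the normalization constant `C_{J→v}`. -/
def factorSum (m : V → Bool → ℝ) (J : 𝒥) {v : V} (hv : v ∈ FG.nbhd J) (x : Bool) : ℝ :=
  ∑ z : {y // y ∈ FG.nbhd J} → Bool,
    if z ⟨v, hv⟩ = x ∧ FG.g J z = true then FG.factorWeight m J v z else 0

variable {FG} {m : V → Bool → ℝ} {x : V → Bool} {J : 𝒥} {v : V}

theorem factorWeight_nonneg (hm : ∀ y ∈ FG.nbhd J, ∀ c, 0 ≤ m y c)
    (z : {y // y ∈ FG.nbhd J} → Bool) : 0 ≤ FG.factorWeight m J v z :=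
  Finset.prod_nonneg fun y _ => hm y.1 (Finset.mem_of_mem_erase y.2) _

theorem factorWeight_le_restrict (hm : ∀ y ∈ FG.nbhd J, ∀ c, 0 ≤ m y c)
    (hdom : ∀ y ∈ FG.nbhd J, ∀ c, m y c ≤ m y (x y)) (z : {y // y ∈ FG.nbhd J} → Bool) :
    FG.factorWeight m J v z ≤ FG.factorWeight m J v (FG.restrict x J) :=
  Finset.prod_le_prod (fun y _ => hm y.1 (Finset.mem_of_mem_erase y.2) _)
    fun y _ => hdom y.1 (Finset.mem_of_mem_erase y.2) _

theorem factorWeight_restrict_pos (hpos : ∀ y ∈ FG.nbhd J, 0 < m y (x y)) :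
    0 < FG.factorWeight m J v (FG.restrict x J) :=
  Finset.prod_pos fun y _ => hpos y.1 (Finset.mem_of_mem_erase y.2)

theorem factorSum_nonneg (hm : ∀ y ∈ FG.nbhd J, ∀ c, 0 ≤ m y c) (hv : v ∈ FG.nbhd J) (c : Bool) :
    0 ≤ FG.factorSum m J hv c :=
  Finset.sum_nonneg fun z _ => by
    split_ifs
    exacts [factorWeight_nonneg hm z, le_rfl]

theorem factorWeight_restrict_le_factorSum (hm : ∀ y ∈ FG.nbhd J, ∀ c, 0 ≤ m y c)
    (hx : FG.g J (FG.restrict x J) = true) (hv : v ∈ FG.nbhd J) :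
    FG.factorWeight m J v (FG.restrict x J) ≤ FG.factorSum m J hv (x v) := by
  have hterm := Finset.single_le_sum
    (f := fun z => if z ⟨v, hv⟩ = x v ∧ FG.g J z = true then FG.factorWeight m J v z else 0)
    (fun z _ => by split_ifs; exacts [factorWeight_nonneg hm z, le_rfl])
    (Finset.mem_univ (FG.restrict x J))
  rwa [if_pos ⟨rfl, hx⟩] at hterm

theorem factorSum_le_card_sat_mul (hm : ∀ y ∈ FG.nbhd J, ∀ c, 0 ≤ m y c)
    (hdom : ∀ y ∈ FG.nbhd J, ∀ c, m y c ≤ m y (x y)) (hv : v ∈ FG.nbhd J) (c : Bool) :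
    FG.factorSum m J hv c ≤ (FG.sat J).card * FG.factorWeight m J v (FG.restrict x J) := by
  calc FG.factorSum m J hv c
      ≤ ∑ z, if FG.g J z = true then FG.factorWeight m J v (FG.restrict x J) else 0 := by
        refine Finset.sum_le_sum fun z _ => ?_
        split_ifs with hz hg
        · exact factorWeight_le_restrict hm hdom z
        · exact absurd hz.2 hg
        · exact factorWeight_nonneg hm _
        · exact le_rfl
    _ = (FG.sat J).card * FG.factorWeight m J v (FG.restrict x J) := by
        rw [← Finset.sum_filter, Finset.sum_const, nsmul_eq_mul, sat]

end FactorGraph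

theorem prior_add_prior_not {V : Type} (q : V → ℝ) (v : V) (b : Bool) :
    prior q v b + prior q v (!b) = 1 := by
  cases b <;> simp [prior]

theorem prior_nonneg {V : Type} {q : V → ℝ} {v : V} (hq : q v ∈ Set.Icc (0 : ℝ) 1) (b : Bool) :
    0 ≤ prior q v b := by
  cases b <;> simp [prior, hq.1, hq.2]

namespace SuffInit

variable {FG : FactorGraph V 𝒥} {q : V → ℝ} {x : V → Bool}

theorem prior_not_lt_eps (h : SuffInit FG q x) (v : V) : prior q v (!x v) < FG.eps v := by
  obtain ⟨h0, h1⟩ := h v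
  cases hx : x v
  · have := h0 hx
    simp only [prior, Bool.not_false, if_true]
    linarith
  · simpa [prior] using h1 hx

theorem prior_not_mul_kappa_pow_lt (h : SuffInit FG q x) (hx : FG.ValidSolution x)
    {v : V} (hq : q v ∈ Set.Icc (0 : ℝ) 1) {e : ℕ} (he : e ≤ (FG.Jset v).card) :
    prior q v (!x v) * (FG.kappa v : ℝ) ^ e < prior q v (x v) := by
  have hsum := prior_add_prior_not q v (x v)
  have := mul_pow_lt_one_sub (prior_nonneg hq _) (h.prior_not_lt_eps v)
    (by exact_mod_cast hx.one_le_kappa v) he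
  linarith

end SuffInit

namespace BPRun

variable {FG : FactorGraph V 𝒥} {q : V → ℝ} (R : BPRun FG q) {x : V → Bool} {n : ℕ}

theorem mFV_succ_eq_factorSum {J : 𝒥} {v : V} (hv : v ∈ FG.nbhd J) (c : Bool) :
    R.mFV (n + 1) J v c = R.CFV (n + 1) J v * FG.factorSum (fun y => R.mVF n y J) J hv c :=
  R.mFV_eq n J v hv c

variable {R}

theorem mFV_succ_pos (hx : FG.ValidSolution x)
    (hmsg : ∀ v J, v ∈ FG.nbhd J → R.mVF n v J (!x v) < R.mVF n v J (x v))
    {J : 𝒥} {v : V} (hv : v ∈ FG.nbhd J) : 0 < R.mFV (n + 1) J v (x v) := by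
  have hm : ∀ y ∈ FG.nbhd J, ∀ c, 0 ≤ R.mVF n y J c := fun y hy c => (R.mVF_mem n y J c hy).1
  have hweight : 0 < FG.factorWeight (fun y => R.mVF n y J) J v (FG.restrict x J) :=
    FG.factorWeight_restrict_pos fun y hy => (hm y hy _).trans_lt (hmsg y J hy)
  rw [R.mFV_succ_eq_factorSum hv]
  exact mul_pos (R.CFV_pos _ J v hv)
    (hweight.trans_le (FG.factorWeight_restrict_le_factorSum hm (hx J) hv))

theorem mFV_succ_le_kappa_mul (hx : FG.ValidSolution x)
    (hmsg : ∀ v J, v ∈ FG.nbhd J → R.mVF n v J (!x v) < R.mVF n v J (x v))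
    {J : 𝒥} {v : V} (hv : v ∈ FG.nbhd J) (c : Bool) :
    R.mFV (n + 1) J v c ≤ FG.kappa v * R.mFV (n + 1) J v (x v) := by
  have hm : ∀ y ∈ FG.nbhd J, ∀ c, 0 ≤ R.mVF n y J c := fun y hy c => (R.mVF_mem n y J c hy).1
  have hdom : ∀ y ∈ FG.nbhd J, ∀ c, R.mVF n y J c ≤ R.mVF n y J (x y) :=
    fun y hy => Bool.le_of_lt_not (f := R.mVF n y J) (hmsg y J hy)
  have hC := (R.CFV_pos (n + 1) J v hv).le
  have hκ : ((FG.sat J).card : ℝ) ≤ FG.kappa v := by exact_mod_cast FG.card_sat_le_kappa hv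
  rw [R.mFV_succ_eq_factorSum hv, R.mFV_succ_eq_factorSum hv]
  calc R.CFV (n + 1) J v * FG.factorSum (fun y => R.mVF n y J) J hv c
      ≤ R.CFV (n + 1) J v *
          ((FG.sat J).card * FG.factorSum (fun y => R.mVF n y J) J hv (x v)) := by
        gcongr
        exact (FG.factorSum_le_card_sat_mul hm hdom hv c).trans
          (by gcongr; exact FG.factorWeight_restrict_le_factorSum hm (hx J) hv)
    _ ≤ R.CFV (n + 1) J v * (FG.kappa v * FG.factorSum (fun y => R.mVF n y J) J hv (x v)) := by
        gcongr
        exact FG.factorSum_nonneg hm hv _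
    _ = FG.kappa v * (R.CFV (n + 1) J v * FG.factorSum (fun y => R.mVF n y J) J hv (x v)) := by
        ring

end BPRun

/-- **Induction step for variable-to-factor messages**: if `x*` is a valid
solution, the priors satisfy the sufficient initialization for `x*`, and at some
iteration `n` the variable-to-factor messages satisfy
`m^{(n)}_{v→J}(x*_v) > m^{(n)}_{v→J}(1 - x*_v)` for every `v ∈ V` and `J ∈ 𝒥_v`,
then the same strict inequality holds at iteration `n + 1`. -/
theorem bp_message_induction_step
    {V 𝒥 : Type} [Fintype V] [DecidableEq V] [Fintype 𝒥] [DecidableEq 𝒥]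
    (FG : FactorGraph V 𝒥) (q : V → ℝ) (R : BPRun FG q)
    (xstar : V → Bool) (hvalid : FG.ValidSolution xstar)
    (hinit : SuffInit FG q xstar) (n : ℕ)
    (hmsg : ∀ v : V, ∀ J : 𝒥, v ∈ FG.nbhd J →
      R.mVF n v J (xstar v) > R.mVF n v J (!xstar v)) :
    ∀ v : V, ∀ J : 𝒥, v ∈ FG.nbhd J →
      R.mVF (n + 1) v J (xstar v) > R.mVF (n + 1) v J (!xstar v) := by
  intro v J hv
  set s := (FG.Jset v).erase J
  have hmem : ∀ I ∈ s, v ∈ FG.nbhd I := fun I hI => FG.mem_Jset.1 (Finset.mem_of_mem_erase hI)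
  have hPs : 0 < ∏ I ∈ s, R.mFV (n + 1) I v (xstar v) :=
    Finset.prod_pos fun I hI => BPRun.mFV_succ_pos hvalid hmsg (hmem I hI)
  have hPn : ∏ I ∈ s, R.mFV (n + 1) I v (!xstar v) ≤
      (FG.kappa v : ℝ) ^ s.card * ∏ I ∈ s, R.mFV (n + 1) I v (xstar v) :=
    Finset.prod_le_pow_card_mul_prod (fun I hI => (R.mFV_mem _ I v _ (hmem I hI)).1)
      fun I hI => BPRun.mFV_succ_le_kappa_mul hvalid hmsg (hmem I hI) _
  have hprior :=
    hinit.prior_not_mul_kappa_pow_lt hvalid (R.q_mem v) (Finset.card_erase_le (a := J))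
  have hC := R.CVF_pos (n + 1) v J hv
  have hp := prior_nonneg (R.q_mem v) (!xstar v)
  rw [gt_iff_lt, R.mVF_eq n v J hv, R.mVF_eq n v J hv]
  calc R.CVF (n + 1) v J * prior q v (!xstar v) * ∏ I ∈ s, R.mFV (n + 1) I v (!xstar v)
      ≤ R.CVF (n + 1) v J * prior q v (!xstar v) *
          ((FG.kappa v : ℝ) ^ s.card * ∏ I ∈ s, R.mFV (n + 1) I v (xstar v)) := by gcongr
    _ = R.CVF (n + 1) v J * (prior q v (!xstar v) * (FG.kappa v : ℝ) ^ s.card) *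
          ∏ I ∈ s, R.mFV (n + 1) I v (xstar v) := by ring
    _ < R.CVF (n + 1) v J * prior q v (xstar v) * ∏ I ∈ s, R.mFV (n + 1) I v (xstar v) := by
      gcongr
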